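/- Let (E, ℛ, τ) satisfy conditions (i), (ii), (iii). Let e ∈ E×, let 𝒮 ⊆ ℛ(e) be nonempty finite, and let R̃ ∈ ℛ(e) ∖ 𝒮. Then R(𝒮,R̃) is contained in E(E,ℛ) ∖ {0} and is a finite cover of e(𝒮) in the semilattice with zero E(E,ℛ) (whose multiplication and partial order are inherited from ℤ[E×]); in particular e(𝒮) = ⋁_{f' ∈ R(𝒮,R̃)} f' in ℤ[E×]. -/

import Mathlib

set_option linter.unusedSectionVars false

/-- A *semilattice with zero*: a commutative idempotent semigroup with an
absorbing element `0`. -/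
class SemilatticeWithZero (E : Type) extends CommSemigroup E, Zero E where
  mul_idem : ∀ e : E, e * e = e
  zero_mul : ∀ e : E, 0 * e = 0

namespace IndRes

variable {E : Type} [SemilatticeWithZero E]

/-- `single e c`, viewed in the semigroup algebra `ℤ[E]`. -/
noncomputable def sgl (e : E) (c : ℤ) : MonoidAlgebra ℤ E := MonoidAlgebra.ofCoeff (Finsupp.single e c)

/-- Truncation map deleting the coefficient at `0`. -/
noncomputable def T (x : MonoidAlgebra ℤ E) : MonoidAlgebra ℤ E := x - sgl 0 (x.coeff 0)

lemma sgl_apply_self (e : E) (c : ℤ) : (sgl e c).coeff e = c := Finsupp.single_eq_same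

lemma sgl_apply_ne (e d : E) (c : ℤ) (h : e ≠ d) : (sgl e c).coeff d = 0 := by
  simp [sgl, Finsupp.single_apply, h]

lemma sgl_add (e : E) (c d : ℤ) : sgl e (c + d) = sgl e c + sgl e d := congrArg MonoidAlgebra.ofCoeff (Finsupp.single_add e c d)

lemma sgl_sub (e : E) (c d : ℤ) : sgl e (c - d) = sgl e c - sgl e d := congrArg MonoidAlgebra.ofCoeff (Finsupp.single_sub e c d)

lemma T_apply_zero (x : MonoidAlgebra ℤ E) : (T x).coeff 0 = 0 := by
  show ((x - sgl 0 (x.coeff 0) : MonoidAlgebra ℤ E)).coeff 0 = 0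
  rw [MonoidAlgebra.coeff_sub, Finsupp.sub_apply, sgl_apply_self, sub_self]

/-- `ℤ[E^×]`, realized as the additive subgroup of the semigroup algebra
`ℤ[E]` consisting of the elements whose coefficient at `0` vanishes; it is the free
`ℤ`-module with basis `E^× = E \ {0}`. -/
noncomputable def ZS (E : Type) [SemilatticeWithZero E] : AddSubgroup (MonoidAlgebra ℤ E) where
  carrier := {x | x.coeff 0 = 0}
  zero_mem' := rfl
  add_mem' := by
    intro a b ha hb
    simp only [Set.mem_setOf_eq] at *
    rw [MonoidAlgebra.coeff_add, Finsupp.add_apply, ha, hb, add_zero]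
  neg_mem' := by
    intro a ha
    simp only [Set.mem_setOf_eq] at *
    rw [MonoidAlgebra.coeff_neg, Finsupp.neg_apply, ha, neg_zero]

/-- The integral semigroup ring `ℤ[E^×]`. -/
abbrev ZE (E : Type) [SemilatticeWithZero E] : Type := ↥(ZS E)

lemma mem_ZS {x : MonoidAlgebra ℤ E} : x ∈ ZS E ↔ x.coeff 0 = 0 := Iff.rfl

lemma T_eq_self {x : MonoidAlgebra ℤ E} (h : x.coeff 0 = 0) : T x = x := by
  simp [T, h, sgl]

lemma T_add (a b : MonoidAlgebra ℤ E) : T (a + b) = T a + T b := by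
  unfold T
  rw [show ((a + b).coeff 0) = a.coeff 0 + b.coeff 0 from Finsupp.add_apply a.coeff b.coeff 0, sgl_add]
  abel

lemma T_sub_sgl (x : MonoidAlgebra ℤ E) (m : ℤ) : T (x - sgl 0 m) = T x := by
  unfold T
  have h : ((x - sgl 0 m : MonoidAlgebra ℤ E)).coeff 0 = x.coeff 0 - m := by
    rw [MonoidAlgebra.coeff_sub, Finsupp.sub_apply, sgl_apply_self]
  rw [h, sgl_sub]
  abel

lemma single_zero_mul (c : ℤ) (b : MonoidAlgebra ℤ E) :
    (sgl 0 c) * b = sgl 0 (((sgl 0 c * b : MonoidAlgebra ℤ E)).coeff 0) := by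
  classical
  ext d
  by_cases hd : d = 0
  · subst hd; rw [sgl_apply_self]
  · rw [sgl_apply_ne 0 d _ (Ne.symm hd)]
    by_contra h
    have hmem : d ∈ ((sgl (0:E) c) * b).coeff.support := Finsupp.mem_support_iff.mpr h
    have h2 := MonoidAlgebra.support_coeff_mul_subset (sgl (0:E) c) b hmem
    rw [Finset.mem_mul] at h2
    obtain ⟨a, ha, b', _, hab⟩ := h2
    have ha' : a = 0 := by
      have := Finsupp.support_single_subset (ha : a ∈ (Finsupp.single (0:E) c).support)
      simpa using this
    exact hd (by rw [← hab, ha', SemilatticeWithZero.zero_mul])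

lemma T_mul_left (a b : MonoidAlgebra ℤ E) : T (T a * b) = T (a * b) := by
  have h1 : T a * b = a * b - (sgl 0 (a.coeff 0)) * b := by rw [T, sub_mul]
  rw [h1, single_zero_mul, T_sub_sgl]

lemma T_mul_right (a b : MonoidAlgebra ℤ E) : T (a * T b) = T (a * b) := by
  rw [mul_comm a (T b), T_mul_left, mul_comm]

noncomputable instance : Mul (ZE E) :=
  ⟨fun x y => ⟨T (x.1 * y.1), T_apply_zero _⟩⟩

lemma ZE.val_mul (x y : ZE E) : (x * y).1 = T (x.1 * y.1) := rfl

noncomputable instance : NonUnitalCommRing (ZE E) :=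
  { (inferInstance : AddCommGroup (ZE E)) with
    mul := (· * ·)
    left_distrib := by
      intro x y z
      apply Subtype.ext
      show T (x.1 * (y.1 + z.1)) = T (x.1 * y.1) + T (x.1 * z.1)
      rw [mul_add, T_add]
    right_distrib := by
      intro x y z
      apply Subtype.ext
      show T ((x.1 + y.1) * z.1) = T (x.1 * z.1) + T (y.1 * z.1)
      rw [add_mul, T_add]
    zero_mul := by
      intro x
      apply Subtype.ext
      show T ((0 : MonoidAlgebra ℤ E) * x.1) = 0
      rw [zero_mul]
      simp [T, sgl]
    mul_zero := by
      intro x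
      apply Subtype.ext
      show T (x.1 * (0 : MonoidAlgebra ℤ E)) = 0
      rw [mul_zero]
      simp [T, sgl]
    mul_assoc := by
      intro x y z
      apply Subtype.ext
      show T (T (x.1 * y.1) * z.1) = T (x.1 * T (y.1 * z.1))
      rw [T_mul_left, T_mul_right, mul_assoc]
    mul_comm := by
      intro x y
      apply Subtype.ext
      show T (x.1 * y.1) = T (y.1 * x.1)
      rw [mul_comm] }

/-- The canonical image of `e ∈ E` in `ℤ[E^×]`: the basis element `e` if `e ≠ 0`,
and `0` if `e = 0`. -/
noncomputable def elt (e : E) : ZE E := ⟨T (sgl e 1), T_apply_zero _⟩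

/-- Product of a (nonempty) finite family in a commutative non-unital ring, computed inside
the unitization.  For a nonempty index set this is the iterated product. -/
noncomputable def nprod {ι A : Type} [NonUnitalCommRing A] (s : Finset ι) (f : ι → A) : A :=
  (∏ j ∈ s, (Unitization.inr (f j) : Unitization ℤ A)).snd

/-- The join `⋁_{j ∈ J} x_j = ∑_{∅ ≠ J' ⊆ J} (-1)^{|J'|+1} ∏_{j ∈ J'} x_j`
of a finite family of idempotents of a commutative non-unital ring. -/
noncomputable def rjoin {ι A : Type} [NonUnitalCommRing A] (s : Finset ι) (f : ι → A) : A :=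
  ∑ t ∈ s.powerset.filter (fun t => t.Nonempty), ((-1 : ℤ) ^ (t.card + 1)) • nprod t f

/-- The join `⋁_{j ∈ J} e_j ∈ ℤ[E^×]` of a finite family of elements of `E`:
`∑_{∅ ≠ J' ⊆ J} (-1)^{|J'|+1} ∏_{j ∈ J'} e_j`, where a product whose value in `E`
is `0` contributes `0`. -/
noncomputable def join {ι : Type} (s : Finset ι) (e : ι → E) : ZE E :=
  rjoin s (fun j => elt (e j))

/-- Iterated product of a nonempty list in a semigroup with zero (the value on the
empty list is the junk value `0`). -/
def listProd : List E → E
  | [] => 0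
  | [a] => a
  | a :: b :: l => a * listProd (b :: l)

/-- The product `∏_{j ∈ s} f j ∈ E` of a (nonempty) finite family. -/
noncomputable def eprod {ι : Type} (s : Finset ι) (f : ι → E) : E :=
  listProd (s.toList.map f)

/-- The support `E(x)` of `x ∈ ℤ[E^×]`: the finite set of elements of `E^×` appearing
with a nonzero coefficient in the reduced form of `x`. -/
noncomputable def supp (x : ZE E) : Finset E := x.1.coeff.support

section Action

variable {Γ : Type} [Group Γ] [MulAction Γ E]

/-- The induced action of `g ∈ Γ` on `ℤ[E^×]`: the `ℤ`-linear map sending a basis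
element `e ∈ E^×` to `g • e`.  (When the action fixes `0` — which is the case for an
action by semigroup automorphisms fixing `0` — the truncation `T` is a no-op, and this
is the automorphism of `ℤ[E^×]` induced by `τ_g`.) -/
noncomputable def act (g : Γ) (x : ZE E) : ZE E :=
  ⟨T (MonoidAlgebra.ofCoeff (Finsupp.mapDomain (fun e : E => g • e) x.1.coeff)), T_apply_zero _⟩

end Action



attribute [local instance] Classical.propDecidable

variable {E : Type} [SemilatticeWithZero E]

/-- A Γ-semilattice structure: the group acts by semigroup automorphisms fixing `0`. -/
def IsGammaSL (Γ E : Type) [Group Γ] [SemilatticeWithZero E] [MulAction Γ E] : Prop :=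
  (∀ (g : Γ) (x y : E), g • (x * y) = (g • x) * (g • y)) ∧ (∀ g : Γ, g • (0 : E) = 0)

/-- The set `E_φ`. -/
def Ephi {D : Type} [NonUnitalCommRing D] (φ : ZE E →ₙ+* D) : Set (ZE E) :=
  { x | ∃ (e : E) (J : Finset E), e ≠ 0 ∧ (∀ f ∈ J, f ≠ 0 ∧ f * e = f ∧ f ≠ e) ∧
      x = elt e - join J (fun f => f) ∧
      φ (elt e) = rjoin J (fun f => φ (elt f)) }

/-- `R` is a finite cover for `e ∈ E^×`. -/
def IsCover (e : E) (R : Finset E) : Prop :=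
  (∀ f ∈ R, f ≠ 0 ∧ f * e = f) ∧
  ∀ f' : E, f' ≠ 0 → f' * e = f' → ∃ f ∈ R, f' * f ≠ 0

/-- `ℛ` is a collection of finite covers for `E`. -/
def CovSystem (ℛ : E → Set (Finset E)) : Prop :=
  ∀ e : E, e ≠ 0 → ∀ R ∈ ℛ e, IsCover e R

/-- Condition (i). -/
def CondI (ℛ : E → Set (Finset E)) : Prop :=
  ∀ d e : E, d ≠ 0 → e ≠ 0 → d * e ≠ 0 → ∀ R ∈ ℛ e,
    d * e ∈ (R.image (fun f => d * f)).erase 0 ∨ (R.image (fun f => d * f)).erase 0 ∈ ℛ (d * e)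

/-- Condition (ii). -/
def CondII (ℛ : E → Set (Finset E)) : Prop :=
  ∀ e : E, e ≠ 0 → ∀ r : ℕ, 0 < r → ∀ Rs : Fin r → Finset E,
    Function.Injective Rs → (∀ i, Rs i ∈ ℛ e) → ∀ ε : Fin r → E,
    (∀ i, ε i ∈ supp (join (Rs i) (fun f => f))) → ∀ j : Fin r,
      (if r = 1 then e else eprod (Finset.univ.erase j) ε) ≠ 0 →
      eprod Finset.univ ε * (if r = 1 then e else eprod (Finset.univ.erase j) ε)
          = eprod Finset.univ ε ∧
      eprod Finset.univ ε ≠ (if r = 1 then e else eprod (Finset.univ.erase j) ε)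

/-- Condition (iii). -/
def CondIII (Γ : Type) [Group Γ] [MulAction Γ E] (ℛ : E → Set (Finset E)) : Prop :=
  ∀ (g : Γ) (e : E), e ≠ 0 →
    (fun R : Finset E => R.image (fun f => g • f)) '' (ℛ e) = ℛ (g • e)

/-- `e(𝒮) = ∏_{R ∈ 𝒮} (e - ⋁R) ∈ ℤ[E^×]`. -/
noncomputable def eS (e : E) (S : Finset (Finset E)) : ZE E :=
  nprod S (fun R => elt e - join R (fun f => f))

/-- `E(E,ℛ) = {e(𝒮) : e ∈ E^×, 𝒮 ⊆ ℛ(e) nonempty finite} ∪ {0} ⊆ ℤ[E^×]`. -/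
def EER (ℛ : E → Set (Finset E)) : Set (ZE E) :=
  {x | ∃ (e : E) (S : Finset (Finset E)), e ≠ 0 ∧ S.Nonempty ∧ ↑S ⊆ ℛ e ∧ x = eS e S} ∪ {0}

/-- `R(𝒮,R̃) = {e(𝒮 ∪ {R̃})} ∪ {f ⬝ e(𝒮) : f ∈ R̃, f ⬝ e(𝒮) ≠ 0}`. -/
noncomputable def RSR (e : E) (S : Finset (Finset E)) (Rt : Finset E) : Finset (ZE E) :=
  insert (eS e (insert Rt S)) ((Rt.image (fun f => elt f * eS e S)).erase 0)

/-- The collection of finite covers `ℛ(E,ℛ)` on `E(E,ℛ)`, assigning to an element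
`x = e(𝒮)` of `E(E,ℛ)^×` the covers `R(𝒮,R̃)`, `R̃ ∈ ℛ(e) ∖ 𝒮` (over all ways of
presenting `x` in the form `e(𝒮)`). -/
def RER (ℛ : E → Set (Finset E)) (x : ZE E) : Set (Finset (ZE E)) :=
  {C | ∃ (e : E) (S : Finset (Finset E)) (Rt : Finset E),
        e ≠ 0 ∧ S.Nonempty ∧ ↑S ⊆ ℛ e ∧ Rt ∈ ℛ e ∧ Rt ∉ S ∧ x = eS e S ∧ C = RSR e S Rt}

/-- The `ℤ`-linear map `ℤ[E₁^×] → ℤ[E₂^×]` induced by a map `θ` from `E₁` to `ℤ[E₂^×]`,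
sending a basis element `e' ∈ E₁^×` to `θ e'`. -/
noncomputable def indMap {E₁ E₂ : Type} [SemilatticeWithZero E₁] [SemilatticeWithZero E₂]
    (θ : E₁ → ZE E₂) : ZE E₁ →ₗ[ℤ] ZE E₂ :=
  (Finsupp.linearCombination ℤ θ).comp ((MonoidAlgebra.coeffAddEquiv.toAddMonoidHom.comp (ZS E₁).subtype).toIntLinearMap)

/-- `(E₁, ℛ₁, θ)` is a realization of the construction `(E(E,ℛ), ℛ(E,ℛ))`:
`θ` identifies the abstract Γ-semilattice `E₁` with `E(E,ℛ) ⊆ ℤ[E^×]` (equivariantly,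
multiplicatively and preserving `0`), and `ℛ₁` corresponds to `ℛ(E,ℛ)` under this
identification. -/
def Realizes {Γ E E₁ : Type} [Group Γ] [SemilatticeWithZero E] [MulAction Γ E]
    [SemilatticeWithZero E₁] [MulAction Γ E₁]
    (ℛ : E → Set (Finset E)) (ℛ₁ : E₁ → Set (Finset E₁)) (θ : E₁ → ZE E) : Prop :=
  Function.Injective θ ∧ Set.range θ = EER ℛ ∧ θ 0 = 0 ∧
  (∀ x y : E₁, θ (x * y) = θ x * θ y) ∧
  (∀ (g : Γ) (x : E₁), θ (g • x) = act g (θ x)) ∧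
  (∀ e' : E₁, e' ≠ 0 → ∀ C : Finset E₁, C ∈ ℛ₁ e' ↔ C.image θ ∈ RER ℛ (θ e'))

end IndRes

/-!
Work in the unitization of `ℤ[E^×]`: there every `e ∈ E^×` is an idempotent and
`⋁R = 1 - ∏_{f ∈ R} (1 - f)`, so for covers below `e` one gets
`e(𝒮) = e ⬝ ∏_{R ∈ 𝒮} ∏_{f ∈ R} (1 - f)`. With `q = e(𝒮)` and `c = ∏_{f ∈ R̃} (1 - f)`, the
members of `R(𝒮,R̃)` are `qc` and the products `fq`, and the Boolean identity
`q = qc ∨ ⋁_f fq` is the join formula `e(𝒮) = ⋁R(𝒮,R̃)`, from which the cover property follows.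
A product `f ⬝ e(𝒮)` equals `f(𝒮_f)` with `𝒮_f = {(f·R)^× : R ∈ 𝒮}`; it vanishes if `f ≤ g` for
some `g` in a member of `𝒮`, and otherwise condition (i) puts `𝒮_f` inside `ℛ(f)`.
Finally `e(𝒮) ≠ 0` because the character `χ_e : ℤ[E^×] → ℤ`, `d ↦ [e ≤ d]`, takes the value `1`
on it: by condition (ii) for `r = 1`, each `⋁R` is supported strictly below `e`.
-/

namespace IndRes

section IdempotentProducts

variable {κ ι M : Type} [CommMonoid M]

theorem mul_prod_eq_self {x : M} {g : κ → M} {s : Finset κ} (h : ∀ i ∈ s, x * g i = x) :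
    x * ∏ i ∈ s, g i = x :=
  Finset.prod_induction g (fun y => x * y = x) (fun a b ha hb => by rw [← mul_assoc, ha, hb])
    (mul_one x) h

theorem mul_prod_congr_of_isIdempotentElem {p : M} (hp : IsIdempotentElem p) {v w : κ → M}
    {s : Finset κ} (h : ∀ i ∈ s, p * v i = p * w i) :
    p * ∏ i ∈ s, v i = p * ∏ i ∈ s, w i := by
  classical
  induction s using Finset.induction_on with
  | empty => rfl
  | insert a s ha ih =>
    have hsplit : ∀ x y : M, p * (x * y) = (p * x) * (p * y) := fun x y => by
      rw [mul_mul_mul_comm, hp.eq]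
    rw [Finset.prod_insert ha, Finset.prod_insert ha, hsplit, hsplit, h a (by simp),
      ih fun i hi => h i (by simp [hi])]

theorem prod_insert_of_isIdempotentElem [DecidableEq κ] {g : κ → M} {a : κ} {s : Finset κ}
    (ha : IsIdempotentElem (g a)) :
    ∏ x ∈ insert a s, g x = g a * ∏ x ∈ s, g x := by
  by_cases has : a ∈ s
  · rw [Finset.insert_eq_self.mpr has, ← Finset.mul_prod_erase s g has, ← mul_assoc, ha.eq]
  · exact Finset.prod_insert has

theorem prod_image_of_isIdempotentElem [DecidableEq κ] {g : κ → M} {h : ι → κ} {s : Finset ι}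
    (hg : ∀ i ∈ s, IsIdempotentElem (g (h i))) :
    ∏ x ∈ s.image h, g x = ∏ i ∈ s, g (h i) := by
  classical
  induction s using Finset.induction_on with
  | empty => simp
  | insert a s ha ih =>
    rw [Finset.image_insert, prod_insert_of_isIdempotentElem (hg a (by simp)),
      Finset.prod_insert ha, ih fun i hi => hg i (by simp [hi])]

theorem isIdempotentElem_prod {g : κ → M} {s : Finset κ} (h : ∀ i ∈ s, IsIdempotentElem (g i)) :
    IsIdempotentElem (∏ i ∈ s, g i) :=
  Finset.prod_induction g _ (fun _ _ => IsIdempotentElem.mul) .one h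

end IdempotentProducts

-- In the Boolean algebra of idempotents: `q = (q ∧ ⋀ᵢ ¬pᵢ) ∨ ⋁ᵢ (pᵢ ∧ q)`.
theorem one_sub_mul_prod_mul_prod_eq_one_sub {κ R : Type} [CommRing R] {q : R}
    (hq : IsIdempotentElem q) {p : κ → R} {s : Finset κ} (hp : ∀ i ∈ s, IsIdempotentElem (p i)) :
    (1 - q * ∏ i ∈ s, (1 - p i)) * ∏ i ∈ s, (1 - p i * q) = 1 - q := by
  set c := ∏ i ∈ s, (1 - p i)
  have hc : IsIdempotentElem c := isIdempotentElem_prod fun i hi => (hp i hi).one_sub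
  have hinside : q * ∏ i ∈ s, (1 - p i * q) = q * c :=
    mul_prod_congr_of_isIdempotentElem hq fun i _ => by linear_combination (-p i) * hq.eq
  have houtside : (1 - q) * ∏ i ∈ s, (1 - p i * q) = 1 - q :=
    mul_prod_eq_self fun i _ => by linear_combination p i * hq.eq
  have hsplit : ∏ i ∈ s, (1 - p i * q) = (1 - q) + q * c := by
    linear_combination hinside + houtside
  rw [hsplit]
  linear_combination (c - c * c) * hq.eq - q * hc.eq

section Unitization

variable {ι A : Type} [NonUnitalCommRing A]

theorem inr_finset_sum (s : Finset ι) (f : ι → A) :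
    ((∑ j ∈ s, f j : A) : Unitization ℤ A) = ∑ j ∈ s, (f j : Unitization ℤ A) :=
  map_sum (Unitization.inrNonUnitalAlgHom ℤ A) f s

theorem coe_nprod {s : Finset ι} (hs : s.Nonempty) (f : ι → A) :
    ((nprod s f : A) : Unitization ℤ A) = ∏ j ∈ s, (f j : Unitization ℤ A) := by
  classical
  refine Unitization.ext ?_ rfl
  obtain ⟨i, hi⟩ := hs
  rw [Unitization.fst_inr, ← Finset.mul_prod_erase s _ hi, Unitization.fst_mul,
    Unitization.fst_inr, zero_mul]

theorem coe_rjoin (s : Finset ι) (f : ι → A) :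
    ((rjoin s f : A) : Unitization ℤ A) = 1 - ∏ j ∈ s, (1 - (f j : Unitization ℤ A)) := by
  classical
  have hfilter : s.powerset.filter (fun t => t.Nonempty) = s.powerset.erase ∅ := by
    ext t
    simp [Finset.nonempty_iff_ne_empty, and_comm]
  have hexpand :=
    Finset.prod_sub (fun _ => (1 : Unitization ℤ A)) (fun j => (f j : Unitization ℤ A)) s
  simp only [Finset.prod_const_one, mul_one] at hexpand
  have hterm : ∀ t ∈ s.powerset.erase ∅,
      (((-1 : ℤ) ^ (t.card + 1) • nprod t f : A) : Unitization ℤ A)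
        = -((-1) ^ t.card * ∏ j ∈ t, (f j : Unitization ℤ A)) := fun t ht => by
    rw [Unitization.inr_smul,
      coe_nprod (Finset.nonempty_iff_ne_empty.mpr (Finset.ne_of_mem_erase ht)), zsmul_eq_mul,
      Int.cast_pow (R := Unitization ℤ A), Int.cast_neg, Int.cast_one]
    ring
  rw [rjoin, hfilter, inr_finset_sum, Finset.sum_congr rfl hterm,
    Finset.sum_neg_distrib, Finset.sum_erase_eq_sub (Finset.empty_mem_powerset s), ← hexpand]
  simp

theorem nprod_singleton (a : ι) (f : ι → A) : nprod {a} f = f a :=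
  Unitization.inr_injective (R := ℤ) <| by
    rw [coe_nprod (Finset.singleton_nonempty a), Finset.prod_singleton]

theorem nprod_cons {a : ι} {s : Finset ι} (ha : a ∉ s) (hs : s.Nonempty) (f : ι → A) :
    nprod (Finset.cons a s ha) f = f a * nprod s f :=
  Unitization.inr_injective (R := ℤ) <| by
    rw [coe_nprod (Finset.cons_nonempty ha), Unitization.inr_mul, coe_nprod hs, Finset.prod_cons]

theorem map_nprod {B : Type} [CommRing B] (φ : A →ₙ+* B) {s : Finset ι} (hs : s.Nonempty)
    (f : ι → A) : φ (nprod s f) = ∏ j ∈ s, φ (f j) := by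
  induction hs using Finset.Nonempty.cons_induction with
  | singleton a => rw [nprod_singleton, Finset.prod_singleton]
  | cons a s ha hs ih => rw [nprod_cons ha hs, map_mul, ih, Finset.prod_cons]

theorem isIdempotentElem_one_sub_inr {a : A} (ha : IsIdempotentElem a) :
    IsIdempotentElem (1 - (a : Unitization ℤ A)) :=
  IsIdempotentElem.one_sub (R := Unitization ℤ A) ((Unitization.isIdempotentElem_inr_iff ℤ).mpr ha)

theorem mul_rjoin_of_mem {s : Finset ι} {f : ι → A} {i : ι} (hi : i ∈ s)
    (hf : IsIdempotentElem (f i)) : f i * rjoin s f = f i :=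
  Unitization.inr_injective (R := ℤ) <| by
    classical
    have hzero : (f i : Unitization ℤ A) * (1 - f i) = 0 := by
      rw [mul_sub, mul_one, ← Unitization.inr_mul, hf.eq, sub_self]
    rw [Unitization.inr_mul, coe_rjoin, ← Finset.mul_prod_erase s _ hi, mul_sub, mul_one,
      ← mul_assoc, hzero, zero_mul, sub_zero]

theorem mul_rjoin_eq_zero {x : A} {s : Finset ι} {f : ι → A} (h : ∀ j ∈ s, x * f j = 0) :
    x * rjoin s f = 0 :=
  Unitization.inr_injective (R := ℤ) <| by
    have hfix : (x : Unitization ℤ A) * ∏ j ∈ s, (1 - (f j : Unitization ℤ A)) = x :=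
      mul_prod_eq_self fun j hj => by rw [mul_sub, mul_one, ← Unitization.inr_mul, h j hj,
        Unitization.inr_zero, sub_zero]
    rw [Unitization.inr_mul, coe_rjoin, mul_sub, mul_one, hfix, sub_self, Unitization.inr_zero]

end Unitization

section Semilattice

attribute [local instance] Classical.propDecidable

variable {E : Type} [SemilatticeWithZero E]

theorem _root_.SemilatticeWithZero.mul_zero (e : E) : e * 0 = 0 := by
  rw [mul_comm, SemilatticeWithZero.zero_mul]

theorem mul_mul_eq_left_iff {e d d' : E} : e * (d * d') = e ↔ e * d = e ∧ e * d' = e := by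
  refine ⟨fun h => ⟨?_, ?_⟩, fun ⟨hd, hd'⟩ => by rw [← mul_assoc, hd, hd']⟩
  · calc e * d = e * (d * d') * d := by rw [h]
      _ = e * (d * d) * d' := by ac_rfl
      _ = e := by rw [SemilatticeWithZero.mul_idem, mul_assoc, h]
  · calc e * d' = e * (d * d') * d' := by rw [h]
      _ = e * d * (d' * d') := by ac_rfl
      _ = e := by rw [SemilatticeWithZero.mul_idem, mul_assoc, h]

noncomputable def filterIndicator (e : E) : E →ₙ* ℤ where
  toFun d := if e * d = e then 1 else 0
  map_mul' d d' := by
    simp only [mul_mul_eq_left_iff]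
    split_ifs <;> simp_all

theorem liftMagma_filterIndicator_apply (e : E) (x : MonoidAlgebra ℤ E) :
    MonoidAlgebra.liftMagma ℤ (filterIndicator e) x
      = ∑ d ∈ x.coeff.support, x.coeff d * if e * d = e then 1 else 0 := by
  simp [MonoidAlgebra.liftMagma_apply_apply, Finsupp.liftAddHom_apply, Finsupp.sum, filterIndicator]

theorem liftMagma_filterIndicator_sgl (e d : E) (c : ℤ) :
    MonoidAlgebra.liftMagma ℤ (filterIndicator e) (sgl d c) = c * if e * d = e then 1 else 0 := by
  simp [MonoidAlgebra.liftMagma_apply_apply, Finsupp.liftAddHom_apply, filterIndicator, sgl]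

-- The character `x ↦ ∑_{d ≥ e} x_d`: multiplicative since `e ≤ d * d'` iff `e ≤ d` and `e ≤ d'`,
-- and `e ≠ 0` makes it ignore the coefficient at `0` that the product of `ℤ[E^×]` discards.
noncomputable def upChar (e : E) (he : e ≠ 0) : ZE E →ₙ+* ℤ where
  toFun x := MonoidAlgebra.liftMagma ℤ (filterIndicator e) x.1
  map_zero' := map_zero _
  map_add' x y := map_add _ x.1 y.1
  map_mul' x y := by
    have hzero : e * 0 ≠ e := by rw [SemilatticeWithZero.mul_zero]; exact he.symm
    simp only [ZE.val_mul, T, map_sub, map_mul, liftMagma_filterIndicator_sgl, if_neg hzero,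
      mul_zero, sub_zero]

theorem upChar_apply (e : E) (he : e ≠ 0) (x : ZE E) :
    upChar e he x = ∑ d ∈ supp x, x.1.coeff d * if e * d = e then 1 else 0 :=
  liftMagma_filterIndicator_apply e x.1

theorem elt_zero : elt (0 : E) = 0 :=
  Subtype.ext <| by simp [elt, T, sgl_apply_self]

theorem elt_val {e : E} (he : e ≠ 0) : (elt e).1 = sgl e 1 :=
  T_eq_self (sgl_apply_ne e 0 1 he)

theorem elt_mul (a b : E) : elt (a * b) = elt a * elt b := by
  by_cases ha : a = 0
  · rw [ha, SemilatticeWithZero.zero_mul, elt_zero, zero_mul]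
  by_cases hb : b = 0
  · rw [hb, SemilatticeWithZero.mul_zero, elt_zero, mul_zero]
  refine Subtype.ext ?_
  rw [ZE.val_mul, elt_val ha, elt_val hb]
  exact congrArg T (MonoidAlgebra.single_mul_single (r₁ := (1 : ℤ)) (r₂ := 1) ..).symm

theorem isIdempotentElem_elt (e : E) : IsIdempotentElem (elt e) := by
  rw [IsIdempotentElem, ← elt_mul, SemilatticeWithZero.mul_idem]

theorem isIdempotentElem_coe_elt (e : E) :
    IsIdempotentElem ((elt e : ZE E) : Unitization ℤ (ZE E)) :=
  (Unitization.isIdempotentElem_inr_iff ℤ).mpr (isIdempotentElem_elt e)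

theorem coe_elt_mul (a b : E) :
    ((elt (a * b) : ZE E) : Unitization ℤ (ZE E)) = elt a * elt b := by
  rw [elt_mul, Unitization.inr_mul]

theorem coe_elt_sub_join {e : E} {R : Finset E} (h : ∀ g ∈ R, g * e = g) :
    ((elt e - join R (fun f => f) : ZE E) : Unitization ℤ (ZE E))
      = elt e * ∏ g ∈ R, (1 - (elt g : Unitization ℤ (ZE E))) := by
  have hfix : ((elt e : Unitization ℤ (ZE E)) - 1) * ∏ g ∈ R, (1 - (elt g : Unitization ℤ (ZE E)))
      = elt e - 1 := mul_prod_eq_self fun g hg => by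
    have hle : (elt e : Unitization ℤ (ZE E)) * elt g = elt g := by
      rw [← coe_elt_mul, mul_comm, h g hg]
    linear_combination -hle
  rw [Unitization.inr_sub, join, coe_rjoin]
  linear_combination -hfix

theorem coe_eS {e : E} {S : Finset (Finset E)} (hS : S.Nonempty)
    (h : ∀ R ∈ S, ∀ g ∈ R, g * e = g) :
    ((eS e S : ZE E) : Unitization ℤ (ZE E))
      = elt e * ∏ R ∈ S, ∏ g ∈ R, (1 - (elt g : Unitization ℤ (ZE E))) := by
  rw [eS, coe_nprod hS, Finset.prod_congr rfl fun R hR => coe_elt_sub_join (h R hR),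
    Finset.prod_mul_distrib, Finset.prod_const, (isIdempotentElem_coe_elt e).pow_eq hS.card_ne_zero]

theorem isIdempotentElem_eS {e : E} {S : Finset (Finset E)} (hS : S.Nonempty)
    (h : ∀ R ∈ S, ∀ g ∈ R, g * e = g) : IsIdempotentElem (eS e S) := by
  rw [← Unitization.isIdempotentElem_inr_iff ℤ, coe_eS hS h]
  refine IsIdempotentElem.mul (S := Unitization ℤ (ZE E)) (isIdempotentElem_coe_elt e) ?_
  exact isIdempotentElem_prod fun R _ =>
    isIdempotentElem_prod fun g _ => (isIdempotentElem_coe_elt g).one_sub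

theorem upChar_elt_self {e : E} (he : e ≠ 0) : upChar e he (elt e) = 1 := by
  change MonoidAlgebra.liftMagma ℤ (filterIndicator e) (elt e).1 = 1
  rw [elt_val he, liftMagma_filterIndicator_sgl,
    if_pos (SemilatticeWithZero.mul_idem e), one_mul]

theorem upChar_eq_zero {e : E} (he : e ≠ 0) {x : ZE E} (hx : ∀ d ∈ supp x, e * d ≠ e) :
    upChar e he x = 0 := by
  rw [upChar_apply]
  exact Finset.sum_eq_zero fun d hd => by rw [if_neg (hx d hd), mul_zero]

theorem mul_eq_left_and_ne_of_mem_supp_join {ℛ : E → Set (Finset E)} (h2 : CondII ℛ) {e : E}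
    (he : e ≠ 0) {R : Finset E} (hR : R ∈ ℛ e) {ε : E} (hε : ε ∈ supp (join R fun f => f)) :
    ε * e = ε ∧ ε ≠ e := by
  have heprod : eprod (Finset.univ : Finset (Fin 1)) (fun _ => ε) = ε := by
    rw [eprod, Finset.univ_unique, Finset.toList_singleton]
    rfl
  have key := h2 e he 1 Nat.one_pos (fun _ => R) (fun i j _ => Subsingleton.elim i j)
    (fun _ => hR) (fun _ => ε) (fun _ => hε) 0 (by rw [if_pos rfl]; exact he)
  rwa [if_pos rfl, heprod] at key

theorem upChar_eS {ℛ : E → Set (Finset E)} (h2 : CondII ℛ) {e : E} (he : e ≠ 0)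
    {S : Finset (Finset E)} (hS : S.Nonempty) (hSR : ↑S ⊆ ℛ e) : upChar e he (eS e S) = 1 := by
  rw [eS, map_nprod _ hS]
  refine Finset.prod_eq_one fun R hR => ?_
  rw [map_sub, upChar_elt_self, upChar_eq_zero he fun ε hε => ?_, sub_zero]
  obtain ⟨hle, hne⟩ := mul_eq_left_and_ne_of_mem_supp_join h2 he (hSR hR) hε
  rwa [mul_comm, hle]

theorem eS_ne_zero {ℛ : E → Set (Finset E)} (h2 : CondII ℛ) {e : E} (he : e ≠ 0)
    {S : Finset (Finset E)} (hS : S.Nonempty) (hSR : ↑S ⊆ ℛ e) : eS e S ≠ 0 := fun h =>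
  zero_ne_one ((map_zero (upChar e he)).symm.trans (h ▸ upChar_eS h2 he hS hSR))

-- `mulCover d R` is the paper's `(d·R)^×`.
noncomputable def mulCover (d : E) (R : Finset E) : Finset E := (R.image fun f => d * f).erase 0

theorem elt_mul_eS_eq_zero {e f : E} {S : Finset (Finset E)} (hS : S.Nonempty)
    (h : ∀ R ∈ S, ∀ g ∈ R, g * e = g) {R : Finset E} (hR : R ∈ S) {g : E} (hg : g ∈ R)
    (hfg : f * g = f) : elt f * eS e S = 0 := by
  refine Unitization.inr_injective (R := ℤ) ?_
  obtain ⟨k, hk⟩ : 1 - (elt g : Unitization ℤ (ZE E))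
      ∣ ∏ R ∈ S, ∏ g ∈ R, (1 - (elt g : Unitization ℤ (ZE E))) :=
    dvd_trans (Finset.dvd_prod_of_mem _ hg) (Finset.dvd_prod_of_mem _ hR)
  have hfg' : (elt f : Unitization ℤ (ZE E)) * (1 - elt g) = 0 := by
    rw [mul_sub, mul_one, ← coe_elt_mul, hfg, sub_self]
  rw [Unitization.inr_mul, coe_eS hS h, hk, Unitization.inr_zero]
  linear_combination (elt e * k) * hfg'

theorem elt_mul_eS {e f : E} (hfe : f * e = f) {S : Finset (Finset E)} (hS : S.Nonempty)
    (h : ∀ R ∈ S, ∀ g ∈ R, g * e = g) : elt f * eS e S = eS f (S.image (mulCover f)) := by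
  have hf := isIdempotentElem_coe_elt f
  have hcover : ∀ R' ∈ S.image (mulCover f), ∀ d ∈ R', d * f = d := by
    rintro _ hR' d hd
    obtain ⟨R, -, rfl⟩ := Finset.mem_image.mp hR'
    obtain ⟨g, -, rfl⟩ := Finset.mem_image.mp (Finset.mem_of_mem_erase hd)
    rw [mul_comm f g, mul_assoc, SemilatticeWithZero.mul_idem]
  refine Unitization.inr_injective (R := ℤ) ?_
  rw [Unitization.inr_mul, coe_eS hS h, coe_eS (hS.image _) hcover,
    ← mul_assoc (G := Unitization ℤ (ZE E)), ← coe_elt_mul, hfe,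
    prod_image_of_isIdempotentElem (s := S) (h := mulCover f)
      (g := fun R' => ∏ d ∈ R', (1 - (elt d : Unitization ℤ (ZE E))))
      fun R _ => isIdempotentElem_prod fun g _ => (isIdempotentElem_coe_elt g).one_sub]
  refine mul_prod_congr_of_isIdempotentElem hf fun R _ => ?_
  rw [mulCover, Finset.prod_erase _ (by rw [elt_zero, Unitization.inr_zero, sub_zero]),
    prod_image_of_isIdempotentElem (s := R) (h := fun g => f * g)
      (g := fun d => 1 - (elt d : Unitization ℤ (ZE E)))
      fun g _ => (isIdempotentElem_coe_elt _).one_sub]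
  refine mul_prod_congr_of_isIdempotentElem hf fun g _ => ?_
  rw [coe_elt_mul]
  linear_combination (elt g : Unitization ℤ (ZE E)) * hf.eq

theorem elt_mul_eS_mem_EER {ℛ : E → Set (Finset E)} (hcov : CovSystem ℛ) (h1 : CondI ℛ) {e f : E}
    (he : e ≠ 0) (hf : f ≠ 0) (hfe : f * e = f) {S : Finset (Finset E)} (hS : S.Nonempty)
    (hSR : ↑S ⊆ ℛ e) (hne : elt f * eS e S ≠ 0) : elt f * eS e S ∈ EER ℛ := by
  have hle : ∀ R ∈ S, ∀ g ∈ R, g * e = g := fun R hR g hg => ((hcov e he R (hSR hR)).1 g hg).2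
  have hmulCover : ∀ R ∈ S, mulCover f R ∈ ℛ f := fun R hR => by
    rcases h1 f e hf he (by rwa [hfe]) R (hSR hR) with hmem | hmem
    · rw [hfe] at hmem
      obtain ⟨g, hg, hfg⟩ := Finset.mem_image.mp (Finset.mem_of_mem_erase hmem)
      exact absurd (elt_mul_eS_eq_zero hS hle hR hg hfg) hne
    · rwa [hfe] at hmem
  refine Or.inl ⟨f, S.image (mulCover f), hf, hS.image _, ?_, elt_mul_eS hfe hS hle⟩
  simpa [Set.subset_def] using hmulCover

theorem coe_eS_insert {e : E} {S : Finset (Finset E)} (hS : S.Nonempty)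
    (h : ∀ R ∈ S, ∀ g ∈ R, g * e = g) {Rt : Finset E} (hRt : ∀ f ∈ Rt, f * e = f) (hRtS : Rt ∉ S) :
    ((eS e (insert Rt S) : ZE E) : Unitization ℤ (ZE E))
      = eS e S * ∏ f ∈ Rt, (1 - (elt f : Unitization ℤ (ZE E))) := by
  rw [coe_eS (Finset.insert_nonempty Rt S) ((Finset.forall_mem_insert _ _ _).mpr ⟨hRt, h⟩),
    coe_eS hS h, Finset.prod_insert hRtS]
  ring

theorem isIdempotentElem_of_mem_RSR {e : E} {S : Finset (Finset E)} (hS : S.Nonempty)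
    (h : ∀ R ∈ S, ∀ g ∈ R, g * e = g) {Rt : Finset E} (hRt : ∀ f ∈ Rt, f * e = f) {y : ZE E}
    (hy : y ∈ RSR e S Rt) : IsIdempotentElem y := by
  rcases Finset.mem_insert.mp hy with rfl | hy
  · exact isIdempotentElem_eS (Finset.insert_nonempty Rt S)
      ((Finset.forall_mem_insert _ _ _).mpr ⟨hRt, h⟩)
  · obtain ⟨f, -, rfl⟩ := Finset.mem_image.mp (Finset.mem_of_mem_erase hy)
    exact (isIdempotentElem_elt f).mul (isIdempotentElem_eS hS h)

theorem eS_eq_rjoin_RSR {e : E} {S : Finset (Finset E)} (hS : S.Nonempty)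
    (h : ∀ R ∈ S, ∀ g ∈ R, g * e = g) {Rt : Finset E} (hRt : ∀ f ∈ Rt, f * e = f) (hRtS : Rt ∉ S) :
    eS e S = rjoin (RSR e S Rt) fun y => y := by
  have hq := (Unitization.isIdempotentElem_inr_iff ℤ).mpr (isIdempotentElem_eS hS h)
  refine Unitization.inr_injective (R := ℤ) ?_
  rw [coe_rjoin, RSR, prod_insert_of_isIdempotentElem (isIdempotentElem_one_sub_inr
      (isIdempotentElem_of_mem_RSR hS h hRt (Finset.mem_insert_self _ _))),
    Finset.prod_erase _ (by rw [Unitization.inr_zero, sub_zero]),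
    prod_image_of_isIdempotentElem fun f _ => isIdempotentElem_one_sub_inr
      ((isIdempotentElem_elt f).mul (isIdempotentElem_eS hS h)),
    coe_eS_insert hS h hRt hRtS]
  simp only [Unitization.inr_mul]
  linear_combination one_sub_mul_prod_mul_prod_eq_one_sub (R := Unitization ℤ (ZE E)) hq
    (s := Rt) fun f _ => isIdempotentElem_coe_elt f

theorem coe_RSR_subset_EER_diff_zero {ℛ : E → Set (Finset E)} (hcov : CovSystem ℛ) (h1 : CondI ℛ)
    (h2 : CondII ℛ) {e : E} (he : e ≠ 0) {S : Finset (Finset E)} (hS : S.Nonempty)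
    (hSR : ↑S ⊆ ℛ e) {Rt : Finset E} (hRt : Rt ∈ ℛ e) : ↑(RSR e S Rt) ⊆ EER ℛ \ {0} := by
  intro y hy
  rcases Finset.mem_insert.mp hy with rfl | hy
  · have hSR' : ↑(insert Rt S) ⊆ ℛ e := by
      rw [Finset.coe_insert]
      exact Set.insert_subset hRt hSR
    exact ⟨Or.inl ⟨e, insert Rt S, he, Finset.insert_nonempty Rt S, hSR', rfl⟩,
      eS_ne_zero h2 he (Finset.insert_nonempty Rt S) hSR'⟩
  · obtain ⟨hy0, hy⟩ := Finset.mem_erase.mp hy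
    obtain ⟨f, hf, rfl⟩ := Finset.mem_image.mp hy
    obtain ⟨hf0, hfe⟩ := (hcov e he Rt hRt).1 f hf
    exact ⟨elt_mul_eS_mem_EER hcov h1 he hf0 hfe hS hSR hy0, hy0⟩

end Semilattice

end IndRes

open IndRes

theorem statement_10_general {E : Type} [SemilatticeWithZero E] (ℛ : E → Set (Finset E))
    (hcov : CovSystem ℛ) (h1 : CondI ℛ) (h2 : CondII ℛ) :
    ∀ e : E, e ≠ 0 → ∀ S : Finset (Finset E), S.Nonempty → ↑S ⊆ ℛ e →
    ∀ Rt ∈ ℛ e, Rt ∉ S →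
      (↑(RSR e S Rt) ⊆ EER ℛ \ {0}) ∧
      (∀ y ∈ RSR e S Rt, y * eS e S = y) ∧
      (∀ z ∈ EER ℛ, z ≠ 0 → z * eS e S = z → ∃ y ∈ RSR e S Rt, z * y ≠ 0) ∧
      eS e S = rjoin (RSR e S Rt) (fun y => y) := by
  intro e he S hS hSR Rt hRt hRtS
  have hSle : ∀ R ∈ S, ∀ g ∈ R, g * e = g := fun R hR g hg => ((hcov e he R (hSR hR)).1 g hg).2
  have hRtle : ∀ f ∈ Rt, f * e = f := fun f hf => ((hcov e he Rt hRt).1 f hf).2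
  have hjoin := eS_eq_rjoin_RSR hS hSle hRtle hRtS
  refine ⟨coe_RSR_subset_EER_diff_zero hcov h1 h2 he hS hSR hRt, fun y hy => ?_,
    fun z _ hz0 hze => ?_, hjoin⟩
  · rw [hjoin]
    exact mul_rjoin_of_mem hy (isIdempotentElem_of_mem_RSR hS hSle hRtle hy)
  · by_contra! hdisjoint
    exact hz0 (by rw [← hze, hjoin, mul_rjoin_eq_zero hdisjoint])

theorem statement_10 {E Γ : Type} [SemilatticeWithZero E] [Group Γ] [MulAction Γ E]
    (hact : IsGammaSL Γ E) (ℛ : E → Set (Finset E))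
    (hcov : CovSystem ℛ) (h1 : CondI ℛ) (h2 : CondII ℛ) (h3 : CondIII Γ ℛ) :
    ∀ e : E, e ≠ 0 → ∀ S : Finset (Finset E), S.Nonempty → ↑S ⊆ ℛ e →
    ∀ Rt ∈ ℛ e, Rt ∉ S →
      (↑(RSR e S Rt) ⊆ EER ℛ \ {0}) ∧
      (∀ y ∈ RSR e S Rt, y * eS e S = y) ∧
      (∀ z ∈ EER ℛ, z ≠ 0 → z * eS e S = z → ∃ y ∈ RSR e S Rt, z * y ≠ 0) ∧
      eS e S = rjoin (RSR e S Rt) (fun y => y) :=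
  statement_10_general ℛ hcov h1 h2
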